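/- The three-qubit pure state |ψ₁⟩ = (|010⟩+|101⟩+|110⟩)/√3 is not a virtual quantum Markov chain, while |ψ₂⟩ = (|010⟩+|011⟩+|100⟩)/√3 is a virtual quantum Markov chain, even though both states have the same quantum conditional mutual information I(A:C|B). -/
import Mathlib


open Matrix BigOperators
open scoped ComplexOrder

/-- The block `Q_BC^(ij) = ⟨i|_A ρ_ABC |j⟩_A` of a tripartite operator. -/
noncomputable def QBC {dA dB dC : ℕ}
    (ρ : Matrix (Fin dA × Fin dB × Fin dC) (Fin dA × Fin dB × Fin dC) ℂ)
    (i j : Fin dA) : Matrix (Fin dB × Fin dC) (Fin dB × Fin dC) ℂ :=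
  Matrix.of fun bc bc' => ρ (i, bc.1, bc.2) (j, bc'.1, bc'.2)

/-- The block `Q_B^(ij) = ⟨i|_A (tr_C ρ_ABC) |j⟩_A`. -/
noncomputable def QB {dA dB dC : ℕ}
    (ρ : Matrix (Fin dA × Fin dB × Fin dC) (Fin dA × Fin dB × Fin dC) ℂ)
    (i j : Fin dA) : Matrix (Fin dB) (Fin dB) ℂ :=
  Matrix.of fun b b' => ∑ c : Fin dC, ρ (i, b, c) (j, b', c)

/-- A linear, Hermitian-preserving and trace-preserving map from system `B` to `B ⊗ C`. -/
def IsHPTP {dB dC : ℕ}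
    (R : Matrix (Fin dB) (Fin dB) ℂ → Matrix (Fin dB × Fin dC) (Fin dB × Fin dC) ℂ) : Prop :=
  IsLinearMap ℂ R ∧ (∀ M, R Mᴴ = (R M)ᴴ) ∧ (∀ M, (R M).trace = M.trace)

/-- The virtual quantum Markov chain criterion `ker [Q_B] ⊆ ker [Q_BC]`. -/
def IsVQMC {dA dB dC : ℕ}
    (ρ : Matrix (Fin dA × Fin dB × Fin dC) (Fin dA × Fin dB × Fin dC) ℂ) : Prop :=
  ∀ c : Fin dA → Fin dA → ℂ,
    (∑ i, ∑ j, c i j • QB ρ i j) = 0 → (∑ i, ∑ j, c i j • QBC ρ i j) = 0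

/-- Outer product `|v⟩⟨v|` of a three-qubit vector. -/
noncomputable def outer (v : Fin 2 × Fin 2 × Fin 2 → ℂ) :
    Matrix (Fin 2 × Fin 2 × Fin 2) (Fin 2 × Fin 2 × Fin 2) ℂ :=
  Matrix.of fun x y => v x * star (v y)

/-- `|ψ₁⟩ = (|010⟩+|101⟩+|110⟩)/√3`. -/
noncomputable def psi1 : Fin 2 × Fin 2 × Fin 2 → ℂ :=
  fun x => if x = (0,1,0) ∨ x = (1,0,1) ∨ x = (1,1,0) then (1 / Real.sqrt 3 : ℝ) else 0

/-- `|ψ₂⟩ = (|010⟩+|011⟩+|100⟩)/√3`. -/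
noncomputable def psi2 : Fin 2 × Fin 2 × Fin 2 → ℂ :=
  fun x => if x = (0,1,0) ∨ x = (0,1,1) ∨ x = (1,0,0) then (1 / Real.sqrt 3 : ℝ) else 0

/-- `|ψ₁⟩` is not a virtual quantum Markov chain while `|ψ₂⟩` is. -/
theorem psi1_not_vqmc_psi2_vqmc :
    ¬ IsVQMC (outer psi1) ∧ IsVQMC (outer psi2) := by
  constructor
  · intro h
    have key := h ![![1, -1], ![0, 0]] ?_
    · have h2 := congrFun (congrFun key (((1 : Fin 2), (0 : Fin 2)) : Fin 2 × Fin 2))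
        (((0 : Fin 2), (1 : Fin 2)) : Fin 2 × Fin 2)
      simp [QBC, outer, psi1, Fin.sum_univ_two, Matrix.sum_apply, Prod.ext_iff] at h2
    · ext b b'
      fin_cases b <;> fin_cases b' <;>
        simp [QB, outer, psi1, Fin.sum_univ_two, Matrix.sum_apply, Prod.ext_iff]
  · intro c hc
    have e00 := congrFun (congrFun hc (0 : Fin 2)) (0 : Fin 2)
    have e01 := congrFun (congrFun hc (0 : Fin 2)) (1 : Fin 2)
    have e10 := congrFun (congrFun hc (1 : Fin 2)) (0 : Fin 2)
    have e11 := congrFun (congrFun hc (1 : Fin 2)) (1 : Fin 2)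
    simp [QB, outer, psi2, Fin.sum_univ_two, Matrix.sum_apply, Prod.ext_iff]
      at e00 e01 e10 e11
    simp [Fin.sum_univ_two, e00, e01, e10, e11]
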